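/- arXiv:2506.18784 — 4 statements merged into one kernel-verified Lean document; each statement's English description precedes it below -/
import Mathlib

section
/- A subset A ⊆ ℤ is completely syndetic if and only if ℤ \ A is not uniform-sub-Szemerédi. -/
/-- `A ⊆ ℤ` is `n`-syndetic: there is a finite `F ⊆ ℤ` such that every subset `S ⊆ ℤ`
with `|S| ≤ n` satisfies `S ⊆ f + A` for some `f ∈ F`. -/
def IsNSyndetic (A : Set ℤ) (n : ℕ) : Prop :=
  ∃ F : Finset ℤ, ∀ S : Finset ℤ, S.card ≤ n → ∃ f ∈ F, (S : Set ℤ) ⊆ (f + ·) '' A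

/-- `A ⊆ ℤ` is completely syndetic: `n`-syndetic for every `n ≥ 1`. -/
def IsCS (A : Set ℤ) : Prop := ∀ n : ℕ, 1 ≤ n → IsNSyndetic A n

/-- `P` contains a sub-arithmetic progression of difference `D` and length `L`:
integers `p₀ < p₁ < ⋯ < p_{L-1}` in `P` with consecutive differences at most `D`. -/
def HasSubAP (P : Set ℤ) (D : ℤ) (L : ℕ) : Prop :=
  ∃ p : ℕ → ℤ, (∀ i, i < L → p i ∈ P) ∧
    ∀ i, i + 1 < L → p i < p (i + 1) ∧ p (i + 1) - p i ≤ D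

/-- `P ⊆ ℤ` is uniform-sub-Szemerédi: for some positive `D`, `P` contains
sub-arithmetic progressions of difference `D` of every length. -/
def IsUSS (P : Set ℤ) : Prop :=
  ∃ D : ℤ, 0 < D ∧ ∀ L : ℕ, HasSubAP P D L

lemma hasSubAP_mono {P : Set ℤ} {D : ℤ} {L L' : ℕ} (h : L ≤ L')
    (hP : HasSubAP P D L') : HasSubAP P D L := by
  obtain ⟨p, h1, h2⟩ := hP
  exact ⟨p, fun i hi => h1 i (lt_of_lt_of_le hi h),
    fun i hi => h2 i (lt_of_lt_of_le hi h)⟩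

lemma subAP_growth {p : ℕ → ℤ} {D : ℤ} {L : ℕ}
    (hinc : ∀ i, i + 1 < L → p i < p (i + 1) ∧ p (i + 1) - p i ≤ D) :
    ∀ j, j < L → p 0 + j ≤ p j := by
  intro j
  induction j with
  | zero => simp
  | succ k ih =>
    intro hk
    have h1 := hinc k hk
    have h2 := ih (by omega)
    push_cast
    omega

/-- Every window of `D+1` consecutive integers inside the range of an increasing
chain with gaps `≤ D` contains a point of the chain. -/
lemma subAP_window {p : ℕ → ℤ} {D : ℤ} {L : ℕ} (hD : 0 < D)
    (hinc : ∀ i, i + 1 < L → p i < p (i + 1) ∧ p (i + 1) - p i ≤ D)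
    (hL : 1 ≤ L) {a : ℤ} (ha0 : p 0 ≤ a) (haL : a + D ≤ p (L - 1)) :
    ∃ i, i < L ∧ a ≤ p i ∧ p i ≤ a + D := by
  classical
  set T : Finset ℕ := (Finset.range L).filter (fun i => p i ≤ a) with hT
  have hTne : T.Nonempty := ⟨0, by simp [hT]; omega⟩
  set i₀ := T.max' hTne with hi₀
  have hi₀T : i₀ ∈ T := T.max'_mem hTne
  have hi₀L : i₀ < L := (Finset.mem_filter.mp hi₀T).1 |> Finset.mem_range.mp
  have hi₀a : p i₀ ≤ a := (Finset.mem_filter.mp hi₀T).2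
  have hne : i₀ + 1 < L := by
    by_contra hcon
    have : i₀ = L - 1 := by omega
    rw [this] at hi₀a
    omega
  have hnotT : i₀ + 1 ∉ T := fun hmem => by
    have := T.le_max' _ hmem
    omega
  have hgt : a < p (i₀ + 1) := by
    by_contra hle
    exact hnotT (Finset.mem_filter.mpr ⟨Finset.mem_range.mpr hne, by omega⟩)
  obtain ⟨h1, h2⟩ := hinc i₀ hne
  exact ⟨i₀ + 1, hne, by omega, by omega⟩

/-- Core lemma for the "not USS implies CS" direction: translates making any
`n`-point set land in `A` can be found in any interval of a fixed length. -/
lemma key_lemma (A : Set ℤ) (hA : ∀ D : ℤ, 0 < D → ∃ L : ℕ, ¬ HasSubAP Aᶜ D L) :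
    ∀ n : ℕ, ∃ M : ℤ, 0 < M ∧ ∀ S : Finset ℤ, S.card ≤ n → ∀ a : ℤ,
      ∃ f, a ≤ f ∧ f < a + M ∧ (S : Set ℤ) ⊆ (f + ·) '' A := by
  intro n
  induction n with
  | zero =>
    refine ⟨1, one_pos, fun S hS a => ⟨a, le_refl a, by omega, ?_⟩⟩
    have : S = ∅ := Finset.card_eq_zero.mp (Nat.le_zero.mp hS)
    simp [this]
  | succ n ih =>
    obtain ⟨M, hM, hgood⟩ := ih
    obtain ⟨L₀, hL₀⟩ := hA M hM
    set L : ℕ := max L₀ 1 with hLdef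
    have hL : ¬ HasSubAP Aᶜ M L := fun h => hL₀ (hasSubAP_mono (le_max_left _ _) h)
    have hL1 : 1 ≤ L := le_max_right _ _
    refine ⟨(L : ℤ) * M, by positivity, ?_⟩
    intro S hS a
    by_cases hc : S.card ≤ n
    · obtain ⟨f, h1, h2, h3⟩ := hgood S hc a
      refine ⟨f, h1, ?_, h3⟩
      have : (M : ℤ) ≤ (L : ℤ) * M := by
        nlinarith [show (1:ℤ) ≤ (L:ℤ) by exact_mod_cast hL1]
      omega
    · have hcard : S.card = n + 1 := by omega
      have hSne : S.Nonempty := Finset.card_pos.mp (by omega)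
      set s := S.max' hSne with hs
      have hsS : s ∈ S := S.max'_mem hSne
      set S' := S.erase s with hS'
      have hScard' : S'.card ≤ n := by
        rw [hS', Finset.card_erase_of_mem hsS]; omega
      by_contra hcon
      push_neg at hcon
      have hg : ∀ b : ℤ, ∃ f, b ≤ f ∧ f < b + M ∧ (S' : Set ℤ) ⊆ (f + ·) '' A :=
        fun b => hgood S' hScard' b
      choose Fc hF1 hF2 hF3 using hg
      set g : ℕ → ℤ := fun k => Nat.rec (Fc a) (fun _ prev => Fc (prev + 1)) k with hgdef
      have hg0 : g 0 = Fc a := rfl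
      have hgsucc : ∀ k, g (k + 1) = Fc (g k + 1) := fun k => rfl
      have hgap : ∀ k, g k < g (k + 1) ∧ g (k + 1) - g k ≤ M := by
        intro k
        have h1 := hF1 (g k + 1)
        have h2 := hF2 (g k + 1)
        rw [hgsucc k]
        omega
      have hga : ∀ k, a ≤ g k := by
        intro k
        induction k with
        | zero => rw [hg0]; exact hF1 a
        | succ k ihk =>
          have := (hgap k).1
          omega
      have hbound : ∀ k, g k < a + ((k : ℤ) + 1) * M := by
        intro k
        induction k with
        | zero =>
          have := hF2 a
          rw [hg0]
          push_cast
          linarith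
        | succ k ihk =>
          have h1 := (hgap k).2
          have h2 := (hgap k).1
          have expand : ((↑(k + 1) : ℤ) + 1) * M = ((k : ℤ) + 1) * M + M := by
            push_cast; ring
          rw [expand]
          omega
      have hcover : ∀ k, (S' : Set ℤ) ⊆ (g k + ·) '' A := by
        intro k
        cases k with
        | zero => exact hF3 a
        | succ k => rw [hgsucc k]; exact hF3 (g k + 1)
      have hbad : ∀ k, k < L → s - g k ∈ Aᶜ := by
        intro k hk
        by_contra hbadk
        have hsA : s - g k ∈ A := not_not.mp hbadk
        have hkL : g k < a + (L : ℤ) * M := by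
          have h1 := hbound k
          have h2 : ((k : ℤ) + 1) * M ≤ (L : ℤ) * M := by
            have : ((k : ℤ) + 1) ≤ (L : ℤ) := by exact_mod_cast hk
            nlinarith
          omega
        refine hcon (g k) (hga k) hkL ?_
        intro x hx
        rcases eq_or_ne x s with rfl | hxs
        · exact ⟨s - g k, hsA, by ring⟩
        · exact hcover k (by
            rw [hS']
            exact Finset.mem_coe.mpr (Finset.mem_erase.mpr ⟨hxs, Finset.mem_coe.mp hx⟩))
      apply hL
      refine ⟨fun j => s - g (L - 1 - j), fun j hj => hbad _ (by omega), ?_⟩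
      intro j hj
      have he1 : L - 1 - j = (L - 2 - j) + 1 := by omega
      have he2 : L - 1 - (j + 1) = L - 2 - j := by omega
      obtain ⟨h1, h2⟩ := hgap (L - 2 - j)
      show s - g (L - 1 - j) < s - g (L - 1 - (j + 1)) ∧
        s - g (L - 1 - (j + 1)) - (s - g (L - 1 - j)) ≤ M
      rw [he1, he2]
      constructor <;> omega

/-- `A ⊆ ℤ` is completely syndetic iff `ℤ \ A` is not uniform-sub-Szemerédi. -/
theorem isCS_iff_not_uss_compl (A : Set ℤ) : IsCS A ↔ ¬ IsUSS Aᶜ := by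
  constructor
  · intro hCS
    rintro ⟨D, hD, hAP⟩
    set n : ℕ := D.toNat + 1 with hn
    obtain ⟨F, hF⟩ := hCS n (by omega)
    set M : ℕ := F.sup fun f => f.natAbs with hMdef
    obtain ⟨p, hpmem, hpinc⟩ := hAP (2 * M + D.toNat + 2)
    set L : ℕ := 2 * M + D.toNat + 2 with hLdef
    have hL1 : 1 ≤ L := by omega
    set S : Finset ℤ := (Finset.range n).image (fun k : ℕ => p 0 + (M : ℤ) + (k : ℤ)) with hSdef
    have hcard : S.card ≤ n := le_trans Finset.card_image_le (by simp)
    obtain ⟨f, hfF, hfS⟩ := hF S hcard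
    have hfabs : f.natAbs ≤ M := Finset.le_sup (f := fun f => f.natAbs) hfF
    have hfabs' : (f.natAbs : ℤ) ≤ (M : ℤ) := by exact_mod_cast hfabs
    have hgrow := subAP_growth hpinc (L - 1) (by omega)
    have hDt : (D.toNat : ℤ) = D := Int.toNat_of_nonneg hD.le
    have hLcast : ((L - 1 : ℕ) : ℤ) = 2 * (M : ℤ) + D + 1 := by
      have : L - 1 = 2 * M + D.toNat + 1 := by omega
      rw [this]; push_cast; omega
    have ha0 : p 0 ≤ p 0 + (M : ℤ) - f := by
      have := Int.le_natAbs (a := f)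
      omega
    have haL : (p 0 + (M : ℤ) - f) + D ≤ p (L - 1) := by
      have habs := Int.le_natAbs (a := -f)
      simp only [Int.natAbs_neg] at habs
      omega
    obtain ⟨i, hiL, hai, haiD⟩ := subAP_window hD hpinc hL1 ha0 haL
    set k : ℕ := (p i - (p 0 + (M : ℤ) - f)).toNat with hkdef
    have hkcast : (k : ℤ) = p i - (p 0 + (M : ℤ) - f) := Int.toNat_of_nonneg (by omega)
    have hkn : k < n := by omega
    have hxS : (p 0 + (M : ℤ) + (k : ℤ)) ∈ S := by
      rw [hSdef]
      exact Finset.mem_image.mpr ⟨k, Finset.mem_range.mpr hkn, rfl⟩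
    obtain ⟨y, hyA, hfy⟩ := hfS (Finset.mem_coe.mpr hxS)
    have hfy' : f + y = p 0 + (M : ℤ) + (k : ℤ) := hfy
    have hyp : y = p i := by omega
    exact (hpmem i hiL) (hyp ▸ hyA)
  · intro hA
    have hA' : ∀ D : ℤ, 0 < D → ∃ L : ℕ, ¬ HasSubAP Aᶜ D L := by
      rw [IsUSS] at hA
      push_neg at hA
      exact hA
    intro n _
    obtain ⟨M, hM, hgood⟩ := key_lemma A hA' n
    refine ⟨Finset.Icc 0 M, fun S hS => ?_⟩
    obtain ⟨f, h1, h2, h3⟩ := hgood S hS 0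
    exact ⟨f, Finset.mem_Icc.mpr ⟨h1, by omega⟩, h3⟩
end

section
/- There exists a subset A ⊆ ℤ that is thick and syndetic but not completely syndetic. -/
/-- `A ⊆ ℤ` is syndetic: `1`-syndetic. -/
def IsSyndetic (A : Set ℤ) : Prop := IsNSyndetic A 1

/-- `A ⊆ ℤ` is thick: every finite set has a translate contained in `A`. -/
def IsThick (A : Set ℤ) : Prop :=
  ∀ F : Finset ℤ, ∃ g : ℤ, (F : Set ℤ) ⊆ (g + ·) '' A

def myA : Set ℤ := {x | x < 0 ∨ Even x ∨ ∃ k : ℕ, (4:ℤ)^k ≤ x ∧ x < 2 * 4^k}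

lemma mem_myA_iff_even {k : ℕ} {x : ℤ} (h1 : 2 * 4^k ≤ x) (h2 : x < 4 * 4^k) :
    x ∈ myA ↔ Even x := by
  have hpos : (0:ℤ) < 4^k := by positivity
  constructor
  · rintro (h | h | ⟨j, hj1, hj2⟩)
    · omega
    · exact h
    · exfalso
      rcases le_or_gt j k with hjk | hjk
      · have : (4:ℤ)^j ≤ 4^k := pow_le_pow_right₀ (by norm_num) hjk
        omega
      · have : (4:ℤ)^(k+1) ≤ 4^j := pow_le_pow_right₀ (by norm_num) hjk
        have : (4:ℤ)^(k+1) = 4 * 4^k := by ring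
        omega
  · intro h
    exact Or.inr (Or.inl h)

/-- There is a thick and syndetic subset of `ℤ` that is not completely syndetic. -/
theorem exists_thick_syndetic_not_cs :
    ∃ A : Set ℤ, IsThick A ∧ IsSyndetic A ∧ ¬ IsCS A := by
  refine ⟨myA, ?_, ?_, ?_⟩
  · -- thick
    intro F
    rcases F.eq_empty_or_nonempty with rfl | hne
    · exact ⟨0, by simp⟩
    · refine ⟨F.max' hne + 1, ?_⟩
      intro x hx
      refine ⟨x - (F.max' hne + 1), Or.inl ?_, by ring⟩
      have := F.le_max' x hx
      omega
  · -- syndetic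
    refine ⟨{0, 1}, ?_⟩
    intro S hS
    rcases Finset.card_le_one_iff_subset_singleton.mp hS with ⟨x, hx⟩
    rcases Int.even_or_odd x with hev | hod
    · refine ⟨0, by simp, ?_⟩
      intro y hy
      have : y = x := by
        have := hx (by exact_mod_cast hy)
        simpa using this
      subst this
      exact ⟨y, Or.inr (Or.inl hev), by ring⟩
    · refine ⟨1, by simp, ?_⟩
      intro y hy
      have : y = x := by
        have := hx (by exact_mod_cast hy)
        simpa using this
      subst this
      refine ⟨y - 1, Or.inr (Or.inl ?_), by ring⟩
      rcases hod with ⟨m, hm⟩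
      exact ⟨m, by omega⟩
  · -- not CS
    intro h
    obtain ⟨F, hF⟩ := h 2 (by norm_num)
    set M : ℕ := F.sup fun f => f.natAbs with hM
    have hMf : ∀ f ∈ F, f.natAbs ≤ M := fun f hf => Finset.le_sup (f := fun f => f.natAbs) hf
    set k : ℕ := M + 2 with hk
    have hklt : (M:ℤ) + 1 < 4 ^ k := by
      have h1 : k < 4 ^ k := Nat.lt_pow_self (by norm_num)
      have h2 : (k:ℤ) < (4:ℤ) ^ k := by exact_mod_cast h1
      omega
    set s : ℤ := 3 * 4 ^ k with hs
    have hse : Even s := by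
      refine ⟨3 * 4 ^ (M + 1) * 2, ?_⟩
      rw [hs, hk]
      ring
    obtain ⟨f, hfF, hsub⟩ := hF {s, s + 1} (by
      apply le_trans (Finset.card_insert_le _ _); simp)
    have hs1 : s ∈ (f + ·) '' myA := hsub (by simp)
    have hs2 : s + 1 ∈ (f + ·) '' myA := hsub (by simp)
    obtain ⟨a, ha, hae⟩ := hs1
    obtain ⟨b, hb, hbe⟩ := hs2
    simp only at hae hbe
    have hfa : |f| ≤ (M:ℤ) := by
      have := hMf f hfF
      rw [Int.abs_eq_natAbs]
      exact_mod_cast this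
    have hfb : -(M:ℤ) ≤ f ∧ f ≤ M := abs_le.mp hfa
    have hpos : (0:ℤ) < 4^k := by positivity
    have haA : Even a := by
      rw [← mem_myA_iff_even (k := k) (by omega) (by omega)] ; exact ha
    have hbA : Even b := by
      rw [← mem_myA_iff_even (k := k) (by omega) (by omega)] ; exact hb
    -- a = s - f, b = s + 1 - f, both even, contradiction
    rcases haA with ⟨m, hm⟩
    rcases hbA with ⟨n, hn⟩
    omega
end

section
/- Let B = {2^n + 2k : n ∈ ℕ, 0 ≤ k ≤ n−1} and let A = ℤ \ (B ∪ (−B)). Then A is thick and syndetic, but A is not 2-syndetic; in particular A is not completely syndetic. -/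
/-- `B = {2^n + 2k : n ∈ ℕ, 0 ≤ k ≤ n - 1}`. -/
def B : Set ℤ := {z : ℤ | ∃ n k : ℕ, k < n ∧ z = 2 ^ n + 2 * k}

lemma B_ge {z : ℤ} (h : z ∈ B) : 2 ≤ z := by
  obtain ⟨p, k, hk, rfl⟩ := h
  have hp : 1 ≤ p := by omega
  have h2 : (2:ℤ)^1 ≤ 2^p := pow_le_pow_right₀ (by norm_num) hp
  have hk0 : (0:ℤ) ≤ (k:ℤ) := Int.natCast_nonneg k
  norm_num at h2 ⊢
  linarith

lemma B_even {z : ℤ} (h : z ∈ B) : Even z := by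
  obtain ⟨p, k, hk, rfl⟩ := h
  have hp : 1 ≤ p := by omega
  obtain ⟨q, rfl⟩ := Nat.exists_eq_add_of_le hp
  exact ⟨2^q + k, by ring⟩

lemma notB {n : ℕ} {z : ℤ} (h1 : 2^n + 2*n - 1 ≤ z) (h2 : z ≤ 2^(n+1) - 1) : z ∉ B := by
  rintro ⟨p, k, hk, rfl⟩
  have hp : 1 ≤ p := by omega
  obtain ⟨q, rfl⟩ : ∃ q, p = q + 1 := ⟨p - 1, by omega⟩
  have hq : (q:ℤ) < 2^q := by exact_mod_cast Nat.lt_two_pow_self (n := q)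
  have hk0 : (0:ℤ) ≤ (k:ℤ) := Int.natCast_nonneg k
  have hkq : (k:ℤ) ≤ q := by exact_mod_cast Nat.lt_succ_iff.mp hk
  have hpow : (2:ℤ)^(q+1) = 2*2^q := by ring
  have h1' : q + 1 ≤ n := by
    by_contra hc
    push_neg at hc
    have hle : (2:ℤ)^(n+1) ≤ 2^(q+1) := pow_le_pow_right₀ (by norm_num) (by omega)
    linarith
  have h2' : n ≤ q + 1 := by
    by_contra hc
    push_neg at hc
    have hle : (2:ℤ)^(q+2) ≤ 2^n := pow_le_pow_right₀ (by norm_num) (by omega)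
    have hn1 : (1:ℤ) ≤ (n:ℤ) := by exact_mod_cast (show 1 ≤ n by omega)
    have hp2 : (2:ℤ)^(q+2) = 4*2^q := by ring
    linarith
  have hn : n = q + 1 := by omega
  subst hn
  have hcast : ((q:ℤ)+1) = ((q+1 : ℕ) : ℤ) := by push_cast; ring
  rw [← hcast] at h1
  linarith

lemma odd_mem_A {z : ℤ} (hz : Odd z) : z ∈ (B ∪ -B)ᶜ := by
  intro h
  rcases h with h | h
  · exact (Int.not_odd_iff_even.mpr (B_even h)) hz
  · have h2 : Even (-z) := B_even (Set.mem_neg.mp h)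
    exact (Int.not_odd_iff_even.mpr h2.neg) (by simpa using hz)

/-- For `A = ℤ \ (B ∪ (-B))` with `B = {2^n + 2k : n ∈ ℕ, 0 ≤ k ≤ n-1}`:
`A` is thick and syndetic, but not `2`-syndetic, and in particular not completely syndetic. -/
theorem thick_syndetic_not_two_syndetic :
    IsThick (B ∪ -B)ᶜ ∧ IsSyndetic (B ∪ -B)ᶜ ∧
      ¬ IsNSyndetic (B ∪ -B)ᶜ 2 ∧ ¬ IsCS (B ∪ -B)ᶜ := by
  have hnot2 : ¬ IsNSyndetic (B ∪ -B)ᶜ 2 := by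
    rintro ⟨F, hF⟩
    set d := F.sup Int.natAbs with hd
    set n := 2*d + 2 with hn
    set s : ℤ := 2^n + 2*d + 2 with hs
    have hcard : ({s, s+1} : Finset ℤ).card ≤ 2 :=
      (Finset.card_insert_le _ _).trans (by simp)
    obtain ⟨f, hfF, hsub⟩ := hF {s, s+1} hcard
    have hfb : f.natAbs ≤ d := Finset.le_sup hfF
    obtain ⟨a, ha, hae⟩ := hsub (show s ∈ (({s, s+1} : Finset ℤ) : Set ℤ) by simp)
    obtain ⟨b, hb, hbe⟩ := hsub (show s + 1 ∈ (({s, s+1} : Finset ℤ) : Set ℤ) by simp)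
    simp only at hae hbe
    have ha' : a = s - f := by omega
    have hb' : b = s + 1 - f := by omega
    subst ha' hb'
    rcases Int.even_or_odd f with ⟨e, rfl⟩ | ⟨e, rfl⟩
    · apply ha
      left
      have hk : (((d:ℤ) + 1 - e).toNat : ℤ) = (d:ℤ) + 1 - e := by omega
      refine ⟨n, ((d:ℤ) + 1 - e).toNat, by omega, ?_⟩
      rw [hk, hs]
      push_cast [hn]
      ring
    · apply hb
      left
      have hk : (((d:ℤ) + 1 - e).toNat : ℤ) = (d:ℤ) + 1 - e := by omega
      refine ⟨n, ((d:ℤ) + 1 - e).toNat, by omega, ?_⟩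
      rw [hk, hs]
      push_cast [hn]
      ring
  refine ⟨?_, ?_, hnot2, fun h => hnot2 (h 2 one_le_two)⟩
  · -- thick
    intro F
    set m := F.sup Int.natAbs with hm
    set n := m + 4 with hn
    refine ⟨-((2:ℤ)^n + 2*n - 1 + m), ?_⟩
    intro x hx
    have hxb : x.natAbs ≤ m := Finset.le_sup (Finset.mem_coe.mp hx)
    refine ⟨x + (2^n + 2*(n:ℤ) - 1 + m), ?_, by ring⟩
    have hP : (0:ℤ) < 2^n := by positivity
    have h2m : ((m:ℤ)) < 2^m := by exact_mod_cast Nat.lt_two_pow_self (n := m)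
    have h16 : (2:ℤ)^n = 16*2^m := by rw [hn]; push_cast; ring
    have hlow : 2^n + 2*(n:ℤ) - 1 ≤ x + (2^n + 2*(n:ℤ) - 1 + m) := by
      have : -(m:ℤ) ≤ x := by omega
      linarith
    have hup : x + (2^n + 2*(n:ℤ) - 1 + m) ≤ 2^(n+1) - 1 := by
      have hx2 : x ≤ (m:ℤ) := by omega
      have hpow2 : (2:ℤ)^(n+1) = 2*2^n := by ring
      have hncast : ((n:ℤ)) = (m:ℤ) + 4 := by rw [hn]; push_cast; ring
      linarith
    intro hmem
    rcases hmem with h | h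
    · exact notB hlow hup h
    · have := B_ge (Set.mem_neg.mp h)
      have hn0 : (0:ℤ) ≤ (n:ℤ) := Int.natCast_nonneg n
      have hm0 : (0:ℤ) ≤ (m:ℤ) := Int.natCast_nonneg m
      have : -(m:ℤ) ≤ x := by omega
      linarith
  · -- syndetic
    refine ⟨{0, 1}, ?_⟩
    intro S hS
    rcases S.eq_empty_or_nonempty with rfl | ⟨t, ht⟩
    · exact ⟨0, by simp, by simp⟩
    · have hall : ∀ x ∈ S, x = t := fun x hx => Finset.card_le_one.mp hS x hx t ht
      rcases Int.even_or_odd t with ⟨e, rfl⟩ | ho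
      · refine ⟨1, by simp, ?_⟩
        intro x hx
        rw [hall x (Finset.mem_coe.mp hx)]
        exact ⟨e + e - 1, odd_mem_A ⟨e - 1, by ring⟩, by simp⟩
      · refine ⟨0, by simp, ?_⟩
        intro x hx
        rw [hall x (Finset.mem_coe.mp hx)]
        exact ⟨t, odd_mem_A ho, by simp⟩
end

section
/- For every ε > 0 there exists a completely syndetic set A ⊆ ℤ whose density, limsup_{r→∞} |A ∩ [−r, r]| / (2r + 1), is less than ε. -/
open Filter

/-- The density of `A ⊆ ℤ`: `limsup_{r → ∞} |A ∩ [-r, r]| / (2r + 1)`. -/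
noncomputable def densityZ (A : Set ℤ) : ℝ :=
  Filter.limsup
    (fun r : ℕ => ((A ∩ Set.Icc (-(r : ℤ)) (r : ℤ)).ncard : ℝ) / (2 * (r : ℝ) + 1))
    Filter.atTop

namespace CSAux

def ee : ℕ → ℕ
  | 0 => 0
  | (i+1) => ee i + (i+1)

def W (m i : ℕ) : ℕ := (2*m)^(ee i)

def Hh (m i : ℕ) : ℕ := m * (2*m)^(ee i + i)

def A (m : ℕ) : Set ℤ :=
  {x | ∃ i : ℕ, (Hh m i : ℤ) ≤ x % (W m (i+1) : ℤ) ∧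
      x % (W m (i+1) : ℤ) < (Hh m i : ℤ) + (W m i : ℤ)}

lemma W_succ (m i : ℕ) : W m (i+1) = 2 * Hh m i := by
  show (2*m)^(ee i + (i+1)) = 2 * (m * (2*m)^(ee i + i))
  rw [show ee i + (i+1) = (ee i + i) + 1 from rfl, pow_succ]
  ring

lemma ee_ge (i : ℕ) : i ≤ ee i := by
  induction i with
  | zero => simp [ee]
  | succ n ih => show n + 1 ≤ ee n + (n+1); omega

lemma ee_mono : Monotone ee := by
  apply monotone_nat_of_le_succ
  intro n; show ee n ≤ ee n + (n+1); omega

lemma W_pos {m : ℕ} (hm : 2 ≤ m) (i : ℕ) : 0 < W m i :=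
  Nat.pow_pos (a := 2*m) (by omega)

lemma Hh_pos {m : ℕ} (hm : 2 ≤ m) (i : ℕ) : 0 < Hh m i :=
  Nat.mul_pos (by omega) (Nat.pow_pos (a := 2*m) (by omega))

lemma two_W_le_Hh {m : ℕ} (hm : 2 ≤ m) (i : ℕ) : 2 * W m i ≤ Hh m i := by
  unfold W Hh
  calc 2 * (2*m)^(ee i) ≤ m * (2*m)^(ee i) := Nat.mul_le_mul_right _ hm
    _ ≤ m * (2*m)^(ee i + i) := Nat.mul_le_mul_left _
        (Nat.pow_le_pow_right (by omega) (by omega))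

lemma W_dvd_succ (m i : ℕ) : W m i ∣ W m (i+1) :=
  pow_dvd_pow _ (ee_mono (by omega))

lemma W_mono {m : ℕ} (hm : 2 ≤ m) {i j : ℕ} (h : i ≤ j) : W m i ≤ W m j :=
  Nat.pow_le_pow_right (by omega) (ee_mono h)

lemma W_mul (m i : ℕ) : W m i * (2*m)^(i+1) = W m (i+1) := by
  show (2*m)^(ee i) * (2*m)^(i+1) = (2*m)^(ee i + (i+1))
  rw [← pow_add]

/-- greedy construction of the shift. -/
def g (m : ℕ) : ℕ → ℤ → List ℤ → ℤ
  | _, f, [] => f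
  | i, f, s :: l =>
      g m (i+1) (f + ((s - f - (Hh m i : ℤ)) % (W m (i+1) : ℤ)) / (W m i : ℤ) * (W m i : ℤ)) l

lemma g_spec {m : ℕ} (hm : 2 ≤ m) : ∀ (l : List ℤ) (i : ℕ) (f : ℤ), 0 ≤ f → f < (W m i : ℤ) →
    0 ≤ g m i f l ∧ g m i f l < (W m (i + l.length) : ℤ) ∧
    (g m i f l) % (W m i : ℤ) = f % (W m i : ℤ) ∧
    ∀ s ∈ l, s - g m i f l ∈ A m := by
  intro l
  induction l with
  | nil =>
    intro i f h0 h1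
    exact ⟨h0, by simpa [g] using h1, rfl, by simp⟩
  | cons s l ih =>
    intro i f h0 h1
    set w : ℤ := (W m i : ℤ) with hw
    set p : ℤ := (W m (i+1) : ℤ) with hp
    set hI : ℤ := (Hh m i : ℤ) with hhI
    have hw_pos : 0 < w := by rw [hw]; exact_mod_cast W_pos hm i
    have hp_pos : 0 < p := by rw [hp]; exact_mod_cast W_pos hm (i+1)
    have hp2 : p = 2 * hI := by rw [hp, hhI]; exact_mod_cast W_succ m i
    have hwH : 2 * w ≤ hI := by rw [hw, hhI]; exact_mod_cast two_W_le_Hh hm i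
    have hw_dvd : w ∣ p := by rw [hw, hp]; exact_mod_cast W_dvd_succ m i
    set r : ℤ := (s - f - hI) % p with hr
    have hr0 : 0 ≤ r := Int.emod_nonneg _ (ne_of_gt hp_pos)
    have hrp : r < p := Int.emod_lt_of_pos _ hp_pos
    set q : ℤ := r / w with hq
    have hqw : q * w = r - r % w := by
      have := Int.mul_ediv_add_emod r w
      rw [hq]; linarith [this]
    have hrw0 : 0 ≤ r % w := Int.emod_nonneg _ (ne_of_gt hw_pos)
    have hrww : r % w < w := Int.emod_lt_of_pos _ hw_pos
    set f' : ℤ := f + q * w with hf'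
    have hgdef : g m i f (s :: l) = g m (i+1) f' l := rfl
    have hf'0 : 0 ≤ f' := by
      have : 0 ≤ q := Int.ediv_nonneg hr0 hw_pos.le
      nlinarith
    have hf'lt : f' < p := by
      obtain ⟨k, hk⟩ := hw_dvd
      have hqk : q < k := by
        have h1 : w * q ≤ r := by rw [mul_comm]; linarith
        have : w * q < w * k := by rw [← hk]; linarith
        exact lt_of_mul_lt_mul_left this hw_pos.le
      have : (q + 1) * w ≤ p := by
        rw [hk, mul_comm]
        exact mul_le_mul_of_nonneg_left (by omega) hw_pos.le
      nlinarith
    obtain ⟨G0, G1, G2, G3⟩ := ih (i+1) f' hf'0 hf'lt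
    rw [hgdef]
    have hpG : p ∣ (g m (i+1) f' l - f') := by
      have := Int.emod_eq_emod_iff_emod_sub_eq_zero.mp G2
      exact Int.dvd_of_emod_eq_zero this
    refine ⟨G0, ?_, ?_, ?_⟩
    · have : i + (s :: l).length = (i + 1) + l.length := by simp; omega
      rw [this]; exact G1
    · have e1 : g m (i+1) f' l % w = f' % w := by
        calc g m (i+1) f' l % w = g m (i+1) f' l % p % w := by
              rw [Int.emod_emod_of_dvd _ hw_dvd]
          _ = f' % p % w := by rw [G2]
          _ = f' % w := by rw [Int.emod_emod_of_dvd _ hw_dvd]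
      rw [e1, hf', Int.add_mul_emod_self_right]
    · intro t ht
      rcases List.mem_cons.mp ht with h | h
      · subst h
        refine ⟨i, ?_⟩
        rw [← hp, ← hw, ← hhI]
        have hkey : (t - g m (i+1) f' l) % p = hI + r % w := by
          have hd1 : p ∣ (t - f - hI) - r := Int.dvd_self_sub_of_emod_eq hr.symm
          have hdvd : p ∣ (t - g m (i+1) f' l) - (hI + r % w) := by
            have heq : (t - g m (i+1) f' l) - (hI + r % w)
                = ((t - f - hI) - r) - (g m (i+1) f' l - f') := by
              rw [hf', hqw]; ring
            rw [heq]
            exact dvd_sub hd1 hpG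
          have h1 : (t - g m (i+1) f' l) % p = (hI + r % w) % p :=
            Int.emod_eq_emod_iff_emod_sub_eq_zero.mpr (Int.emod_eq_zero_of_dvd hdvd)
          rw [h1, Int.emod_eq_of_lt (by linarith) (by linarith)]
        rw [hkey]
        constructor <;> linarith
      · exact G3 t h

open Filter

lemma isCS_A {m : ℕ} (hm : 2 ≤ m) : _root_.IsCS (A m) := by
  intro n _
  refine ⟨Finset.Icc 0 ((W m n : ℕ) : ℤ), ?_⟩
  intro S hS
  have hW0 : ((0:ℤ)) < (W m 0 : ℤ) := by exact_mod_cast W_pos hm 0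
  obtain ⟨h0, h1, -, hmem⟩ := g_spec hm S.toList 0 0 le_rfl (by simpa [W, ee] using hW0)
  refine ⟨g m 0 0 S.toList, ?_, ?_⟩
  · rw [Finset.mem_Icc]
    refine ⟨h0, le_of_lt (lt_of_lt_of_le h1 ?_)⟩
    have : W m (0 + S.toList.length) ≤ W m n := by
      apply W_mono hm
      simpa [Finset.length_toList] using hS
    exact_mod_cast this
  · intro x hx
    exact ⟨x - g m 0 0 S.toList, hmem x (by rwa [Finset.mem_toList, ← Finset.mem_coe]),
      by simp⟩

/-- If scale `i` is hit inside `[-r, r]`, then `W m (i+1) ≤ 4r`. -/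
lemma scale_bound {m : ℕ} (hm : 2 ≤ m) {i r : ℕ} {x : ℤ}
    (hx1 : -(r:ℤ) ≤ x) (hx2 : x ≤ r)
    (h1 : (Hh m i : ℤ) ≤ x % (W m (i+1) : ℤ))
    (h2 : x % (W m (i+1) : ℤ) < (Hh m i : ℤ) + (W m i : ℤ)) :
    (W m (i+1) : ℤ) ≤ 4 * r := by
  set w : ℤ := (W m i : ℤ) with hw
  set p : ℤ := (W m (i+1) : ℤ) with hp
  set hI : ℤ := (Hh m i : ℤ) with hhI
  have hw_pos : 0 < w := by rw [hw]; exact_mod_cast W_pos hm i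
  have hp_pos : 0 < p := by rw [hp]; exact_mod_cast W_pos hm (i+1)
  have hp2 : p = 2 * hI := by rw [hp, hhI]; exact_mod_cast W_succ m i
  have hwH : 2 * w ≤ hI := by rw [hw, hhI]; exact_mod_cast two_W_le_Hh hm i
  rcases le_or_gt 0 x with hx0 | hx0
  · have hmle : x % p ≤ x := by
      have h3 : x - x % p = p * (x / p) := by
        have := Int.mul_ediv_add_emod x p
        linarith
      have h4 : 0 ≤ x / p := Int.ediv_nonneg hx0 hp_pos.le
      nlinarith
    linarith
  · rcases le_or_gt 0 (x + p) with hy0 | hy0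
    · have hyp : x + p < p := by linarith
      have : (x + p) % p = x % p := by simp [Int.add_emod]
      have hme : x % p = x + p := by
        rw [← this, Int.emod_eq_of_lt hy0 hyp]
      linarith
    · linarith

/-- Counting: scale-`i` points of `[-r,r]`, multiplied by `(2m)^(i+1)`, number at most `10r`. -/
lemma count_bound {m : ℕ} (hm : 2 ≤ m) (r i : ℕ) :
    ((Finset.Icc (-(r:ℤ)) r).filter (fun x => (Hh m i : ℤ) ≤ x % (W m (i+1) : ℤ) ∧
      x % (W m (i+1) : ℤ) < (Hh m i : ℤ) + (W m i : ℤ))).card * (2*m)^(i+1) ≤ 10 * r := by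
  set B := (Finset.Icc (-(r:ℤ)) r).filter (fun x => (Hh m i : ℤ) ≤ x % (W m (i+1) : ℤ) ∧
      x % (W m (i+1) : ℤ) < (Hh m i : ℤ) + (W m i : ℤ)) with hB
  rcases B.eq_empty_or_nonempty with h | ⟨x₀, hx₀⟩
  · rw [h]; simp
  · set w : ℤ := (W m i : ℤ) with hw
    set p : ℤ := (W m (i+1) : ℤ) with hp
    set hI : ℤ := (Hh m i : ℤ) with hhI
    have hw_pos : 0 < w := by rw [hw]; exact_mod_cast W_pos hm i
    have hp_pos : 0 < p := by rw [hp]; exact_mod_cast W_pos hm (i+1)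
    have hwc : w * ((2*m:ℕ):ℤ)^(i+1) = p := by
      rw [hw, hp]
      exact_mod_cast W_mul m i
    -- p ≤ 4r from the witness
    have hp4r : p ≤ 4 * r := by
      rw [hB, Finset.mem_filter, Finset.mem_Icc] at hx₀
      exact scale_bound hm hx₀.1.1 hx₀.1.2 hx₀.2.1 hx₀.2.2
    -- injection into quotient × remainder
    set a : ℤ := (r:ℤ) / p with ha
    set b : ℤ := (-(r:ℤ)) / p with hb
    have hcard : B.card ≤ ((Finset.Icc b a) ×ˢ (Finset.Ico hI (hI + w))).card := by
      apply Finset.card_le_card_of_injOn (fun x => (x / p, x % p))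
      · intro x hx
        rw [Finset.mem_coe, Finset.mem_filter, Finset.mem_Icc] at hx
        rw [Finset.mem_coe, Finset.mem_product, Finset.mem_Icc, Finset.mem_Ico]
        refine ⟨⟨Int.ediv_le_ediv hp_pos hx.1.1, Int.ediv_le_ediv hp_pos hx.1.2⟩, hx.2.1, hx.2.2⟩
      · intro x _ y _ hxy
        have h1 : x / p = y / p := congrArg Prod.fst hxy
        have h2 : x % p = y % p := congrArg Prod.snd hxy
        have ex := Int.mul_ediv_add_emod x p
        have ey := Int.mul_ediv_add_emod y p
        rw [h1, h2] at ex
        linarith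
    have hprod : ((Finset.Icc b a) ×ˢ (Finset.Ico hI (hI + w))).card
        = (a + 1 - b).toNat * w.toNat := by
      have hIw : hI + w - hI = w := by ring
      rw [Finset.card_product, Int.card_Icc, Int.card_Ico, hIw]
    -- bounds on a, b
    have ha0 : 0 ≤ a := Int.ediv_nonneg (by positivity) hp_pos.le
    have hapr : a * p ≤ r := by
      have := Int.mul_ediv_add_emod (r:ℤ) p
      have := Int.emod_nonneg (r:ℤ) (ne_of_gt hp_pos)
      nlinarith
    have hba : b ≤ a := Int.ediv_le_ediv hp_pos (by linarith [Nat.cast_nonneg (α := ℤ) r])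
    have hbge : -a - 1 ≤ b := by
      rw [hb, Int.le_ediv_iff_mul_le hp_pos]
      have h5 := Int.emod_lt_of_pos (r:ℤ) hp_pos
      have h6 := Int.mul_ediv_add_emod (r:ℤ) p
      nlinarith
    -- final count in ℤ
    have hfinal : (B.card : ℤ) * ((2*m:ℕ):ℤ)^(i+1) ≤ 10 * r := by
      have h7 : (B.card : ℤ) ≤ (a + 1 - b) * w := by
        calc (B.card : ℤ) ≤ (((a + 1 - b).toNat * w.toNat : ℕ) : ℤ) := by
              exact_mod_cast hcard.trans (le_of_eq hprod)
          _ = (a + 1 - b) * w := by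
              push_cast
              rw [Int.toNat_of_nonneg (by omega), Int.toNat_of_nonneg hw_pos.le]
      have h8 : (a + 1 - b) * w ≤ (2*a + 2) * w := by
        apply mul_le_mul_of_nonneg_right _ hw_pos.le
        omega
      have hcpos : (0:ℤ) < ((2*m:ℕ):ℤ)^(i+1) := by positivity
      calc (B.card : ℤ) * ((2*m:ℕ):ℤ)^(i+1) ≤ (2*a + 2) * w * ((2*m:ℕ):ℤ)^(i+1) := by
            apply mul_le_mul_of_nonneg_right (h7.trans h8) hcpos.le
        _ = (2*a + 2) * p := by rw [mul_assoc, hwc]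
        _ = 2 * (a * p) + 2 * p := by ring
        _ ≤ 2 * r + 8 * r := by linarith
        _ = 10 * r := by ring
    exact_mod_cast hfinal


lemma total_bound {m : ℕ} (hm : 2 ≤ m) (r : ℕ) :
    ((A m ∩ Set.Icc (-(r:ℤ)) r).ncard : ℝ) ≤ 10 * r / m := by
  classical
  set B : ℕ → Finset ℤ := fun i => (Finset.Icc (-(r:ℤ)) r).filter
    (fun x => (Hh m i : ℤ) ≤ x % (W m (i+1):ℤ) ∧
      x % (W m (i+1):ℤ) < (Hh m i:ℤ) + (W m i:ℤ)) with hB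
  have hsub : A m ∩ Set.Icc (-(r:ℤ)) r ⊆ ↑((Finset.range r).biUnion B) := by
    rintro x ⟨⟨i, h1, h2⟩, hx1, hx2⟩
    have hir : i < r := by
      by_contra hge
      push_neg at hge
      have h4r := scale_bound hm hx1 hx2 h1 h2
      have hgrow : 4 * r < W m (i+1) := by
        calc 4 * r < 4 * 4^r := by
              have : r < 4^r := lt_of_lt_of_le (Nat.lt_two_pow_self (n := r))
                (Nat.pow_le_pow_left (by norm_num) r)
              omega
          _ = 4^(r+1) := by rw [pow_succ]; ring
          _ ≤ 4^(i+1) := Nat.pow_le_pow_right (by norm_num) (by omega)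
          _ ≤ (2*m)^(i+1) := Nat.pow_le_pow_left (by omega) _
          _ ≤ (2*m)^(ee (i+1)) := Nat.pow_le_pow_right (by omega) (ee_ge (i+1))
          _ = W m (i+1) := rfl
      have : (4 * (r:ℤ)) < (W m (i+1) : ℤ) := by exact_mod_cast hgrow
      linarith
    exact Finset.mem_coe.mpr (Finset.mem_biUnion.mpr ⟨i, Finset.mem_range.mpr hir,
      Finset.mem_filter.mpr ⟨Finset.mem_Icc.mpr ⟨hx1, hx2⟩, h1, h2⟩⟩)
  have hn1 : (A m ∩ Set.Icc (-(r:ℤ)) r).ncard ≤ ((Finset.range r).biUnion B).card := by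
    rw [← Set.ncard_coe_finset]
    exact Set.ncard_le_ncard hsub (Finset.finite_toSet _)
  have hn2 : ((Finset.range r).biUnion B).card ≤ ∑ i ∈ Finset.range r, (B i).card :=
    Finset.card_biUnion_le
  have hmR : (0:ℝ) < (m:ℝ) := by exact_mod_cast (by omega : 0 < m)
  have h2m : (1:ℝ) < (2*(m:ℝ)) := by
    have : (1:ℕ) < 2*m := by omega
    exact_mod_cast this
  have hterm : ∀ i, ((B i).card : ℝ) ≤ 10 * r / ((2*(m:ℝ)))^(i+1) := by
    intro i
    have h := count_bound hm r i
    rw [le_div_iff₀ (by positivity)]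
    exact_mod_cast h
  set x : ℝ := ((2*(m:ℝ)))⁻¹ with hx
  have hx0 : 0 < x := by positivity
  have hx1 : x < 1 := by
    rw [hx]
    rw [inv_lt_one_iff₀]
    right; exact h2m
  have h1x : 0 < 1 - x := by linarith
  have hgeom : ∑ i ∈ Finset.range r, x^i ≤ (1 - x)⁻¹ := by
    rw [geom_sum_eq (ne_of_lt hx1)]
    rw [div_le_iff_of_neg (by linarith : x - 1 < 0)]
    have hp : 0 ≤ x^r := by positivity
    have hinv : (1-x)⁻¹ * (1-x) = 1 := inv_mul_cancel₀ (ne_of_gt h1x)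
    nlinarith [hinv, hp]
  have hm2 : (2*(m:ℝ)) ≠ 0 := by positivity
  have hm21 : (2*(m:ℝ) - 1) ≠ 0 := by nlinarith
  calc ((A m ∩ Set.Icc (-(r:ℤ)) r).ncard : ℝ)
      ≤ ((∑ i ∈ Finset.range r, (B i).card : ℕ) : ℝ) := by exact_mod_cast hn1.trans hn2
    _ = ∑ i ∈ Finset.range r, ((B i).card : ℝ) := by push_cast; rfl
    _ ≤ ∑ i ∈ Finset.range r, 10 * r / ((2*(m:ℝ)))^(i+1) :=
        Finset.sum_le_sum (fun i _ => hterm i)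
    _ = 10 * r * x * ∑ i ∈ Finset.range r, x^i := by
        rw [Finset.mul_sum]
        apply Finset.sum_congr rfl
        intro i _
        rw [div_eq_mul_inv, hx, ← inv_pow, pow_succ]
        ring
    _ ≤ 10 * r * x * (1 - x)⁻¹ := by
        apply mul_le_mul_of_nonneg_left hgeom (by positivity)
    _ ≤ 10 * r / m := by
        have hm2R : (2:ℝ) ≤ (m:ℝ) := by exact_mod_cast hm
        have key : x * (1-x)⁻¹ = (2*(m:ℝ) - 1)⁻¹ := by
          have h1x' : 1 - (2*(m:ℝ))⁻¹ = (2*(m:ℝ) - 1) * (2*(m:ℝ))⁻¹ := by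
            field_simp
          rw [hx, h1x', mul_inv ((2*(m:ℝ)-1)) ((2*(m:ℝ))⁻¹), inv_inv,
            mul_comm ((2*(m:ℝ)-1)⁻¹) _, ← mul_assoc, inv_mul_cancel₀ hm2, one_mul]
        have hxx : x * (1-x)⁻¹ ≤ ((m:ℝ))⁻¹ := by
          rw [key]
          apply inv_anti₀ hmR
          linarith
        rw [div_eq_mul_inv]
        calc 10 * (r:ℝ) * x * (1-x)⁻¹ = 10 * r * (x * (1-x)⁻¹) := by ring
          _ ≤ 10 * r * ((m:ℝ))⁻¹ := by
              apply mul_le_mul_of_nonneg_left hxx (by positivity)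

end CSAux

/-- For every `ε > 0` there is a completely syndetic `A ⊆ ℤ` of density less than `ε`. -/
theorem exists_cs_of_small_density (ε : ℝ) (hε : 0 < ε) :
    ∃ A : Set ℤ, IsCS A ∧ densityZ A < ε := by
  set m : ℕ := ⌈5/ε⌉₊ + 2 with hm_def
  have hm : 2 ≤ m := by omega
  have hmpos : (0:ℝ) < (m:ℝ) := by exact_mod_cast (by omega : 0 < m)
  have h5m : 5 / (m:ℝ) < ε := by
    rw [div_lt_iff₀ hmpos]
    have h1 : 5/ε ≤ (⌈5/ε⌉₊ : ℝ) := Nat.le_ceil _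
    have h2 : 5/ε < (m:ℝ) := by
      have heq : ((⌈5/ε⌉₊ + 2 : ℕ) : ℝ) = (⌈5/ε⌉₊ : ℝ) + 2 := by push_cast; ring
      rw [hm_def, heq]; linarith
    calc 5 = (5/ε)*ε := by field_simp
      _ < (m:ℝ)*ε := mul_lt_mul_of_pos_right h2 hε
      _ = ε*(m:ℝ) := by ring
  refine ⟨CSAux.A m, CSAux.isCS_A hm, ?_⟩
  have hub : ∀ r : ℕ, ((CSAux.A m ∩ Set.Icc (-(r:ℤ)) (r:ℤ)).ncard : ℝ) / (2*(r:ℝ)+1)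
      ≤ 5/(m:ℝ) := by
    intro r
    have h1 := CSAux.total_bound hm r
    have hr1 : (0:ℝ) < 2*(r:ℝ)+1 := by positivity
    rw [div_le_iff₀ hr1]
    calc ((CSAux.A m ∩ Set.Icc (-(r:ℤ)) (r:ℤ)).ncard : ℝ) ≤ 10*(r:ℝ)/(m:ℝ) := h1
      _ ≤ 5/(m:ℝ)*(2*(r:ℝ)+1) := by
          rw [div_mul_eq_mul_div, div_le_div_iff₀ hmpos hmpos]
          nlinarith [Nat.cast_nonneg (α := ℝ) r]
  have hle : densityZ (CSAux.A m) ≤ 5/(m:ℝ) := by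
    unfold densityZ
    apply Filter.limsup_le_of_le
    · exact isCoboundedUnder_le_of_le Filter.atTop
        (fun r => by positivity)
    · exact Filter.Eventually.of_forall hub
  linarith
end
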